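/- Let α ≥ 0 and 1 < p < q < ∞. Then X^p_α ⊆ X^q_α, with ‖g‖_{X^q_α}^q ≤ C ‖g‖_{X^p_α}^p·‖g‖_{X^p_α}^{q-p} type control; in particular every g ∈ X^p_α satisfies sup_{a∈𝔻} (1-|a|²)^{2+α} ∫_𝔻 |g'(z)|² dA_α(z)/|1-conj(a)z|^{2+2α} ≤ C ‖g‖_{X^p_α}². -/

import Mathlib

open MeasureTheory Metric Complex ENNReal

/-- The open unit disk in `ℂ`. -/
def unitDisk : Set ℂ := Metric.ball (0 : ℂ) 1

/-- Normalized area measure `dA = (1/π) dx dy` on `ℂ`. -/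
noncomputable def mA : Measure ℂ := (ENNReal.ofReal Real.pi)⁻¹ • volume

/-- The `p`-th power of the `X^p_α` norm:
`‖g‖_{X^p_α}^p = |g(0)|^p + ∫_𝔻 ((1-|w|²)^α ∫_𝔻 |g'(z)|² dA_α(z)/|1-conj(w)z|^{2+2α})^{p/2}
(1-|w|²)^{p-2} dA(w)`, valued in `[0,∞]`. -/
noncomputable def XnormE (p α : ℝ) (g : ℂ → ℂ) : ℝ≥0∞ :=
  ENNReal.ofReal (‖g 0‖ ^ p) +
    ∫⁻ w in unitDisk,
      (ENNReal.ofReal ((1 - ‖w‖ ^ 2) ^ α) *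
        ∫⁻ z in unitDisk,
          ENNReal.ofReal (‖deriv g z‖ ^ 2 * ((α + 1) * (1 - ‖z‖ ^ 2) ^ α) /
            ‖1 - (starRingEnd ℂ) w * z‖ ^ (2 + 2 * α)) ∂mA) ^ (p / 2) *
      ENNReal.ofReal ((1 - ‖w‖ ^ 2) ^ (p - 2)) ∂mA

/-!
Set `N(w) = (1-|w|²)^{2+α} ∫_𝔻 |g'|² dA_α / |1-w̄z|^{2+2α}`;
then the integrand of `‖g‖_{X^p_α}^p` equals `N(w)^{p/2} (1-|w|²)^{-2}`. On the disk of radius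
`(1-|a|)/2` around `a` the weight `1-|w|²` and the kernel `|1-w̄z|` are comparable to their
values at `a`, so the integrand is comparable to its value at `a`; integrating over this disk, of
area `≍ (1-|a|²)²`, gives `N(a)^{p/2} ≲ ‖g‖_{X^p_α}^p`. Writing the `X^q_α` integrand as the
`X^p_α` integrand times `N(w)^{(q-p)/2}` and bounding the last factor by this supremum estimate
gives the embedding.
-/

open ComplexConjugate

noncomputable def kernelIntegral (α : ℝ) (g : ℂ → ℂ) (w : ℂ) : ℝ≥0∞ :=
  ∫⁻ z in unitDisk,
    ENNReal.ofReal (‖deriv g z‖ ^ 2 * ((α + 1) * (1 - ‖z‖ ^ 2) ^ α) /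
      ‖1 - conj w * z‖ ^ (2 + 2 * α)) ∂mA

noncomputable def normalizedKernelIntegral (α : ℝ) (g : ℂ → ℂ) (w : ℂ) : ℝ≥0∞ :=
  ENNReal.ofReal ((1 - ‖w‖ ^ 2) ^ (2 + α)) * kernelIntegral α g w

noncomputable def xIntegrand (p α : ℝ) (g : ℂ → ℂ) (w : ℂ) : ℝ≥0∞ :=
  (ENNReal.ofReal ((1 - ‖w‖ ^ 2) ^ α) * kernelIntegral α g w) ^ (p / 2) *
    ENNReal.ofReal ((1 - ‖w‖ ^ 2) ^ (p - 2))

lemma XnormE_eq (p α : ℝ) (g : ℂ → ℂ) :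
    XnormE p α g = ENNReal.ofReal (‖g 0‖ ^ p) + ∫⁻ w in unitDisk, xIntegrand p α g w ∂mA :=
  rfl

lemma mem_unitDisk {z : ℂ} : z ∈ unitDisk ↔ ‖z‖ < 1 := mem_ball_zero_iff

lemma mA_ball (a : ℂ) (r : ℝ) : mA (ball a r) = ENNReal.ofReal r ^ 2 := by
  rw [mA, Measure.smul_apply, smul_eq_mul, Complex.volume_ball, ← NNReal.coe_real_pi,
    ENNReal.ofReal_coe_nnreal, mul_left_comm, ENNReal.inv_mul_cancel
    (ENNReal.coe_ne_zero.mpr NNReal.pi_ne_zero) ENNReal.coe_ne_top, mul_one]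

lemma norm_lt_one_of_mem_ball {a w : ℂ} (hw : w ∈ ball a ((1 - ‖a‖) / 2)) :
    ‖a‖ < 1 ∧ ‖w‖ < 1 := by
  rw [mem_ball, dist_eq_norm] at hw
  constructor <;> linarith [norm_sub_norm_le w a, norm_nonneg (w - a)]

lemma ball_subset_unitDisk (a : ℂ) : ball a ((1 - ‖a‖) / 2) ⊆ unitDisk := fun _ hw =>
  mem_unitDisk.mpr (norm_lt_one_of_mem_ball hw).2

lemma one_sub_sq_norm_mem_Icc {a w : ℂ} (hw : w ∈ ball a ((1 - ‖a‖) / 2)) :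
    (1 - ‖a‖ ^ 2) / 4 ≤ 1 - ‖w‖ ^ 2 ∧ 1 - ‖w‖ ^ 2 ≤ 3 * (1 - ‖a‖ ^ 2) := by
  have hw₁ := (norm_lt_one_of_mem_ball hw).2
  rw [mem_ball, dist_eq_norm] at hw
  have h₁ := norm_sub_norm_le w a
  have h₂ : ‖a‖ - ‖w‖ ≤ ‖w - a‖ := by simpa [norm_sub_rev] using norm_sub_norm_le a w
  constructor <;> nlinarith [norm_nonneg a, norm_nonneg w]

lemma norm_one_sub_conj_mul_le {a w z : ℂ} (hw : w ∈ ball a ((1 - ‖a‖) / 2)) (hz : ‖z‖ ≤ 1) :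
    ‖1 - conj w * z‖ ≤ 3 / 2 * ‖1 - conj a * z‖ := by
  rw [mem_ball, dist_eq_norm] at hw
  have hdiff : 1 - conj w * z = (1 - conj a * z) + conj (a - w) * z := by
    rw [map_sub]; ring
  have hwz : ‖conj (a - w) * z‖ ≤ (1 - ‖a‖) / 2 := by
    rw [norm_mul, RCLike.norm_conj, norm_sub_rev]
    nlinarith [norm_nonneg z, norm_nonneg (w - a)]
  have haz : 1 - ‖a‖ ≤ ‖1 - conj a * z‖ := by
    have : ‖conj a * z‖ ≤ ‖a‖ := by
      rw [norm_mul, RCLike.norm_conj]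
      nlinarith [norm_nonneg a, norm_nonneg z]
    linarith [norm_sub_norm_le (1 : ℂ) (conj a * z), norm_one (α := ℂ)]
  calc ‖1 - conj w * z‖ ≤ ‖1 - conj a * z‖ + ‖conj (a - w) * z‖ := hdiff ▸ norm_add_le _ _
    _ ≤ 3 / 2 * ‖1 - conj a * z‖ := by linarith

lemma norm_one_sub_conj_mul_pos {w z : ℂ} (hw : ‖w‖ < 1) (hz : ‖z‖ ≤ 1) :
    0 < ‖1 - conj w * z‖ := by
  have : ‖conj w * z‖ < 1 := by
    rw [norm_mul, RCLike.norm_conj]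
    nlinarith [norm_nonneg w, norm_nonneg z]
  linarith [norm_sub_norm_le (1 : ℂ) (conj w * z), norm_one (α := ℂ)]

lemma kernelIntegral_le {α : ℝ} (hα : -1 ≤ α) (g : ℂ → ℂ) {a w : ℂ}
    (hw : w ∈ ball a ((1 - ‖a‖) / 2)) :
    ENNReal.ofReal ((2 / 3) ^ (2 + 2 * α)) * kernelIntegral α g a ≤ kernelIntegral α g w := by
  rw [kernelIntegral, kernelIntegral, ← lintegral_const_mul' _ _ ofReal_ne_top]
  refine setLIntegral_mono' measurableSet_ball fun z hz => ?_
  have hz₁ : ‖z‖ ≤ 1 := (mem_unitDisk.mp hz).le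
  have hs : 0 ≤ 2 + 2 * α := by linarith
  have hN : 0 ≤ ‖deriv g z‖ ^ 2 * ((α + 1) * (1 - ‖z‖ ^ 2) ^ α) := by
    have : 0 ≤ 1 - ‖z‖ ^ 2 := by nlinarith [norm_nonneg z]
    have := Real.rpow_nonneg this α
    have : 0 ≤ α + 1 := by linarith
    positivity
  obtain ⟨ha₁, hw₁⟩ := norm_lt_one_of_mem_ball hw
  have hA := norm_one_sub_conj_mul_pos hw₁ hz₁
  have hB := norm_one_sub_conj_mul_pos ha₁ hz₁
  rw [← ENNReal.ofReal_mul (by positivity)]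
  refine ENNReal.ofReal_le_ofReal ?_
  calc (2 / 3) ^ (2 + 2 * α) * (_ / ‖1 - conj a * z‖ ^ (2 + 2 * α))
      = _ / (3 / 2 * ‖1 - conj a * z‖) ^ (2 + 2 * α) := by
        rw [Real.mul_rpow (by norm_num) hB.le, show (2 / 3 : ℝ) = (3 / 2)⁻¹ by norm_num,
          Real.inv_rpow (by norm_num)]
        field_simp
    _ ≤ _ := div_le_div_of_nonneg_left hN (Real.rpow_pos_of_pos hA _)
        (Real.rpow_le_rpow hA.le (norm_one_sub_conj_mul_le hw hz₁) hs)

lemma min_rpow_mul_rpow_le {s x : ℝ} (β : ℝ) (hs : 0 < s) (h₁ : s / 4 ≤ x) (h₂ : x ≤ 3 * s) :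
    min ((1 / 4) ^ β) (3 ^ β) * s ^ β ≤ x ^ β := by
  rcases le_or_gt 0 β with hβ | hβ
  · calc min ((1 / 4) ^ β) (3 ^ β) * s ^ β ≤ (1 / 4) ^ β * s ^ β := by gcongr; exact min_le_left _ _
      _ = (s / 4) ^ β := by rw [← Real.mul_rpow (by norm_num) hs.le]; ring_nf
      _ ≤ x ^ β := Real.rpow_le_rpow (by linarith) h₁ hβ
  · calc min ((1 / 4) ^ β) (3 ^ β) * s ^ β ≤ 3 ^ β * s ^ β := by gcongr; exact min_le_right _ _
      _ = (3 * s) ^ β := (Real.mul_rpow (by norm_num) hs.le).symm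
      _ ≤ x ^ β := Real.rpow_le_rpow_of_nonpos (by linarith) h₂ hβ.le

lemma exists_ofReal_mul_xIntegrand_le {α p : ℝ} (hα : -1 ≤ α) (hp : 0 ≤ p) :
    ∃ c : ℝ, 0 < c ∧ ∀ (g : ℂ → ℂ) (a w : ℂ), w ∈ ball a ((1 - ‖a‖) / 2) →
      ENNReal.ofReal c * xIntegrand p α g a ≤ xIntegrand p α g w := by
  set c₁ : ℝ := min ((1 / 4) ^ α) (3 ^ α) * (2 / 3) ^ (2 + 2 * α)
  set c₂ : ℝ := min ((1 / 4) ^ (p - 2)) (3 ^ (p - 2))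
  have hc₁ : 0 ≤ c₁ := by positivity
  refine ⟨c₁ ^ (p / 2) * c₂, by positivity, fun g a w hw => ?_⟩
  obtain ⟨h₁, h₂⟩ := one_sub_sq_norm_mem_Icc hw
  have hs : 0 < 1 - ‖a‖ ^ 2 := by nlinarith [norm_nonneg a, (norm_lt_one_of_mem_ball hw).1]
  have hweight : ENNReal.ofReal c₁ *
      (ENNReal.ofReal ((1 - ‖a‖ ^ 2) ^ α) * kernelIntegral α g a) ≤
      ENNReal.ofReal ((1 - ‖w‖ ^ 2) ^ α) * kernelIntegral α g w := by
    calc _ = ENNReal.ofReal (min ((1 / 4) ^ α) (3 ^ α) * (1 - ‖a‖ ^ 2) ^ α) *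
          (ENNReal.ofReal ((2 / 3) ^ (2 + 2 * α)) * kernelIntegral α g a) := by
          rw [ENNReal.ofReal_mul (by positivity), ENNReal.ofReal_mul (by positivity)]; ring
      _ ≤ _ := mul_le_mul' (ENNReal.ofReal_le_ofReal (min_rpow_mul_rpow_le α hs h₁ h₂))
          (kernelIntegral_le hα g hw)
  have hpower : ENNReal.ofReal c₂ * ENNReal.ofReal ((1 - ‖a‖ ^ 2) ^ (p - 2)) ≤
      ENNReal.ofReal ((1 - ‖w‖ ^ 2) ^ (p - 2)) := by
    rw [← ENNReal.ofReal_mul (by positivity)]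
    exact ENNReal.ofReal_le_ofReal (min_rpow_mul_rpow_le _ hs h₁ h₂)
  calc ENNReal.ofReal (c₁ ^ (p / 2) * c₂) * xIntegrand p α g a
      = (ENNReal.ofReal c₁ * (ENNReal.ofReal ((1 - ‖a‖ ^ 2) ^ α) * kernelIntegral α g a)) ^
          (p / 2) * (ENNReal.ofReal c₂ * ENNReal.ofReal ((1 - ‖a‖ ^ 2) ^ (p - 2))) := by
        rw [xIntegrand, ENNReal.ofReal_mul (by positivity), ← ENNReal.ofReal_rpow_of_nonneg hc₁
          (by positivity)]
        simp only [ENNReal.mul_rpow_of_nonneg _ _ (by positivity : (0 : ℝ) ≤ p / 2)]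
        ring
    _ ≤ xIntegrand p α g w := mul_le_mul' (ENNReal.rpow_le_rpow hweight (by positivity)) hpower

lemma xIntegrand_eq {p : ℝ} (hp : 0 ≤ p) (α : ℝ) (g : ℂ → ℂ) {w : ℂ} (hw : ‖w‖ < 1) :
    xIntegrand p α g w =
      normalizedKernelIntegral α g w ^ (p / 2) * ENNReal.ofReal (1 - ‖w‖ ^ 2) ^ (-2 : ℝ) := by
  have hs : 0 < 1 - ‖w‖ ^ 2 := by nlinarith [norm_nonneg w]
  set t := ENNReal.ofReal (1 - ‖w‖ ^ 2)
  have merge : ∀ x y : ℝ, t ^ x * t ^ y = t ^ (x + y) := fun x y =>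
    (ENNReal.rpow_add x y (ENNReal.ofReal_pos.mpr hs).ne' ofReal_ne_top).symm
  simp only [xIntegrand, normalizedKernelIntegral, ← ENNReal.ofReal_rpow_of_pos hs]
  rw [ENNReal.mul_rpow_of_nonneg _ _ (by positivity), ENNReal.mul_rpow_of_nonneg _ _ (by positivity),
    ← ENNReal.rpow_mul, ← ENNReal.rpow_mul, mul_right_comm, merge, mul_right_comm, merge]
  congr 2
  ring

lemma xIntegrand_eq_mul {p q : ℝ} (hp : 0 ≤ p) (hpq : p ≤ q) (α : ℝ) (g : ℂ → ℂ) {w : ℂ}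
    (hw : ‖w‖ < 1) :
    xIntegrand q α g w = xIntegrand p α g w * normalizedKernelIntegral α g w ^ ((q - p) / 2) := by
  rw [xIntegrand_eq (hp.trans hpq) α g hw, xIntegrand_eq hp α g hw,
    show q / 2 = p / 2 + (q - p) / 2 by ring,
    ENNReal.rpow_add_of_nonneg _ _ (by positivity) (by linarith), mul_right_comm]

lemma exists_ofReal_mul_normalizedKernelIntegral_rpow_le {α p : ℝ} (hα : -1 ≤ α) (hp : 0 ≤ p) :
    ∃ c : ℝ, 0 < c ∧ ∀ (g : ℂ → ℂ), ∀ a ∈ unitDisk,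
      ENNReal.ofReal c * normalizedKernelIntegral α g a ^ (p / 2) ≤ XnormE p α g := by
  obtain ⟨c, hc, hharnack⟩ := exists_ofReal_mul_xIntegrand_le hα hp
  refine ⟨c / 16, by positivity, fun g a ha => ?_⟩
  have ha₁ := mem_unitDisk.mp ha
  have hs : 0 < 1 - ‖a‖ ^ 2 := by nlinarith [norm_nonneg a]
  have hball : ENNReal.ofReal (1 / 16) * ENNReal.ofReal (1 - ‖a‖ ^ 2) ^ (2 : ℝ) ≤
      mA (ball a ((1 - ‖a‖) / 2)) := by
    rw [mA_ball, ENNReal.rpow_two, ← ENNReal.ofReal_pow hs.le, ← ENNReal.ofReal_mul (by norm_num),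
      ← ENNReal.ofReal_pow (by linarith)]
    exact ENNReal.ofReal_le_ofReal (by nlinarith [norm_nonneg a])
  set t := ENNReal.ofReal (1 - ‖a‖ ^ 2)
  calc ENNReal.ofReal (c / 16) * normalizedKernelIntegral α g a ^ (p / 2)
      = ENNReal.ofReal c * ENNReal.ofReal (1 / 16) * normalizedKernelIntegral α g a ^ (p / 2) *
          (t ^ (-2 : ℝ) * t ^ (2 : ℝ)) := by
        rw [← ENNReal.rpow_add _ _ (ENNReal.ofReal_pos.mpr hs).ne' ofReal_ne_top,
          div_eq_mul_one_div, ENNReal.ofReal_mul hc.le]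
        norm_num
    _ = ENNReal.ofReal c * xIntegrand p α g a * (ENNReal.ofReal (1 / 16) * t ^ (2 : ℝ)) := by
        rw [xIntegrand_eq hp α g ha₁]; ring
    _ ≤ ENNReal.ofReal c * xIntegrand p α g a * mA (ball a ((1 - ‖a‖) / 2)) := by gcongr
    _ = ∫⁻ _ in ball a ((1 - ‖a‖) / 2), ENNReal.ofReal c * xIntegrand p α g a ∂mA :=
        (setLIntegral_const _ _).symm
    _ ≤ ∫⁻ w in ball a ((1 - ‖a‖) / 2), xIntegrand p α g w ∂mA :=
        setLIntegral_mono' measurableSet_ball (hharnack g a)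
    _ ≤ ∫⁻ w in unitDisk, xIntegrand p α g w ∂mA := lintegral_mono_set (ball_subset_unitDisk a)
    _ ≤ XnormE p α g := le_add_self

lemma exists_normalizedKernelIntegral_le {α p : ℝ} (hα : -1 ≤ α) (hp : 0 < p) :
    ∃ C : ℝ≥0∞, C ≠ ⊤ ∧ ∀ (g : ℂ → ℂ), ∀ a ∈ unitDisk,
      normalizedKernelIntegral α g a ≤ C * XnormE p α g ^ (2 / p) := by
  obtain ⟨c, hc, hbound⟩ := exists_ofReal_mul_normalizedKernelIntegral_rpow_le hα hp.le
  refine ⟨ENNReal.ofReal c⁻¹ ^ (2 / p),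
    ENNReal.rpow_ne_top_of_nonneg (by positivity) ofReal_ne_top, fun g a ha => ?_⟩
  rw [← ENNReal.mul_rpow_of_nonneg _ _ (by positivity), ← inv_div,
    ENNReal.le_rpow_inv_iff (by positivity), ENNReal.ofReal_inv_of_pos hc,
    ← ENNReal.div_eq_inv_mul, ENNReal.le_div_iff_mul_le (Or.inl (by simpa using hc))
      (Or.inl ofReal_ne_top), mul_comm]
  exact hbound g a ha

lemma XnormE_le_of_normalizedKernelIntegral_le {α p q : ℝ} (hp : 0 < p) (hpq : p ≤ q)
    {g : ℂ → ℂ} {C : ℝ≥0∞} (hC : C ≠ ⊤)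
    (hN : ∀ a ∈ unitDisk, normalizedKernelIntegral α g a ≤ C * XnormE p α g ^ (2 / p)) :
    XnormE q α g ≤ (1 + C ^ ((q - p) / 2)) * XnormE p α g ^ (q / p) := by
  set S := XnormE p α g
  have hqp : 0 ≤ (q - p) / 2 := by linarith
  have hq_div : 0 < q / p := div_pos (by linarith) hp
  rcases eq_or_ne S ⊤ with hS | hS
  · rw [hS, ENNReal.top_rpow_of_pos hq_div, ENNReal.mul_top (by simp)]
    exact le_top
  have hvalue : ENNReal.ofReal (‖g 0‖ ^ q) ≤ S ^ (q / p) := by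
    have hpow : ‖g 0‖ ^ q = (‖g 0‖ ^ p) ^ (q / p) := by
      rw [← Real.rpow_mul (norm_nonneg _), mul_div_cancel₀ q hp.ne']
    rw [hpow, ← ENNReal.ofReal_rpow_of_nonneg (by positivity) hq_div.le]
    exact ENNReal.rpow_le_rpow le_self_add hq_div.le
  set D := (C * S ^ (2 / p)) ^ ((q - p) / 2) with hD_def
  have hD : D ≠ ⊤ := ENNReal.rpow_ne_top_of_nonneg hqp
    (ENNReal.mul_ne_top hC (ENNReal.rpow_ne_top_of_nonneg (by positivity) hS))
  have hsplit : ∀ w ∈ unitDisk, xIntegrand q α g w ≤ xIntegrand p α g w * D := by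
    intro w hw
    rw [xIntegrand_eq_mul hp.le hpq α g (mem_unitDisk.mp hw)]
    gcongr
    exact ENNReal.rpow_le_rpow (hN w hw) hqp
  have hintegral : ∫⁻ w in unitDisk, xIntegrand q α g w ∂mA ≤ C ^ ((q - p) / 2) * S ^ (q / p) :=
    calc _ ≤ ∫⁻ w in unitDisk, xIntegrand p α g w * D ∂mA :=
          setLIntegral_mono' measurableSet_ball hsplit
      _ = (∫⁻ w in unitDisk, xIntegrand p α g w ∂mA) * D := lintegral_mul_const' D _ hD
      _ ≤ S * D := by gcongr; exact le_add_self
      _ = C ^ ((q - p) / 2) * S ^ (q / p) := by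
        rw [hD_def, ENNReal.mul_rpow_of_nonneg _ _ hqp, ← ENNReal.rpow_mul, mul_left_comm,
          show q / p = 1 + 2 / p * ((q - p) / 2) by field_simp; ring,
          ENNReal.rpow_add_of_nonneg _ _ zero_le_one (by positivity), ENNReal.rpow_one]
  calc XnormE q α g = ENNReal.ofReal (‖g 0‖ ^ q) + ∫⁻ w in unitDisk, xIntegrand q α g w ∂mA :=
        XnormE_eq q α g
    _ ≤ S ^ (q / p) + C ^ ((q - p) / 2) * S ^ (q / p) := add_le_add hvalue hintegral
    _ = (1 + C ^ ((q - p) / 2)) * S ^ (q / p) := by ring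

/-- Let `α ≥ 0` and `1 < p < q < ∞`. Then `X^p_α ⊆ X^q_α`, with
`‖g‖_{X^q_α}^q ≤ C (‖g‖_{X^p_α}^p)^{q/p}`; in particular every `g ∈ X^p_α` satisfies
`sup_{a∈𝔻} (1-|a|²)^{2+α} ∫_𝔻 |g'(z)|² dA_α(z)/|1-conj(a)z|^{2+2α} ≤ C ‖g‖_{X^p_α}²`. -/
theorem stmt11 (α p q : ℝ) (hα : 0 ≤ α) (hp : 1 < p) (hpq : p < q) :
    ∃ C : ℝ≥0∞, C ≠ ⊤ ∧ ∀ g : ℂ → ℂ, DifferentiableOn ℂ g unitDisk →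
      XnormE q α g ≤ C * (XnormE p α g) ^ (q / p) ∧
      ∀ a ∈ unitDisk,
        ENNReal.ofReal ((1 - ‖a‖ ^ 2) ^ (2 + α)) *
          ∫⁻ z in unitDisk,
            ENNReal.ofReal (‖deriv g z‖ ^ 2 * ((α + 1) * (1 - ‖z‖ ^ 2) ^ α) /
              ‖1 - (starRingEnd ℂ) a * z‖ ^ (2 + 2 * α)) ∂mA ≤
        C * (XnormE p α g) ^ (2 / p) := by
  obtain ⟨C₀, hC₀, hN⟩ :=
    exists_normalizedKernelIntegral_le (by linarith : -1 ≤ α) (by linarith : 0 < p)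
  have hC₁ : C₀ ^ ((q - p) / 2) ≠ ⊤ := ENNReal.rpow_ne_top_of_nonneg (by linarith) hC₀
  refine ⟨C₀ + (1 + C₀ ^ ((q - p) / 2)), by finiteness, fun g _ => ⟨?_, fun a ha => ?_⟩⟩
  · refine (XnormE_le_of_normalizedKernelIntegral_le (by linarith) hpq.le hC₀ (hN g)).trans ?_
    gcongr ?_ * _
    exact le_add_self
  · refine (hN g a ha).trans ?_
    gcongr
    exact le_self_add
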